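/- Let q_1, …, q_n be positive integers with Σ_{i=1}^n q_i = 2B, and consider the single-commodity instance G formed by connecting n two-link stages in series, where stage i consists of a top edge with constant latency q_i and a bottom edge with latency q_i·x, with unit demand routed across. The edge flow o routing 1/2 on every edge is socially optimal, and the following are equivalent: (i) there exists I ⊆ {1,…,n} with Σ_{i∈I} q_i = B; (ii) o admits a path-flow decomposition that is 1-EF; (iii) o admits a path-flow decomposition that is a (3/2)-UNE. -/

import Mathlib

open scoped BigOperators

/-- A routing instance: a finite directed (multi)graph given by source/target maps
on edges, a finite set of commodities with sources, sinks, demands, and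
load-dependent latency functions on edges. -/
structure RoutingInstance (V E K : Type*) where
  src : E → V
  tgt : E → V
  source : K → V
  sink : K → V
  demand : K → ℝ
  latency : E → ℝ → ℝ

namespace RoutingInstance

variable {V E K : Type*} [Fintype V] [Fintype E] [Fintype K] [DecidableEq E]

/-- Standard assumptions: positive demands, latencies nonnegative and
nondecreasing on `[0, ∞)`. -/
def Standard (G : RoutingInstance V E K) : Prop :=
  (∀ k, 0 < G.demand k) ∧
  (∀ e x, (0:ℝ) ≤ x → 0 ≤ G.latency e x) ∧
  (∀ e, MonotoneOn (G.latency e) (Set.Ici (0:ℝ)))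

/-- `G.IsWalkFrom s t l` : the list of edges `l` is a directed walk from `s` to `t`. -/
def IsWalkFrom (G : RoutingInstance V E K) : V → V → List E → Prop
  | s, t, [] => s = t
  | s, t, e :: es => G.src e = s ∧ IsWalkFrom G (G.tgt e) t es

/-- The list of vertices visited by a walk starting at `s`. -/
def walkVerts (G : RoutingInstance V E K) (s : V) (l : List E) : List V :=
  s :: l.map G.tgt

/-- A simple directed path from the source of commodity `k` to its sink. -/
def IsPathOf (G : RoutingInstance V E K) (k : K) (p : List E) : Prop :=
  G.IsWalkFrom (G.source k) (G.sink k) p ∧ (G.walkVerts (G.source k) p).Nodup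

/-- A feasible path flow: nonnegative, supported on simple `s_k`-`t_k` paths,
and routing the whole demand of each commodity. -/
def Feasible (G : RoutingInstance V E K) (f : K → (List E →₀ ℝ)) : Prop :=
  (∀ k p, 0 ≤ f k p) ∧
  (∀ k p, f k p ≠ 0 → G.IsPathOf k p) ∧
  (∀ k, ((f k).sum fun _ v => v) = G.demand k)

/-- Edge flow of commodity `k` induced by a path flow. -/
def edgeFlowK (G : RoutingInstance V E K) (f : K → (List E →₀ ℝ)) (k : K) (e : E) : ℝ :=
  (f k).sum fun p v => if e ∈ p then v else 0

/-- Total edge flow induced by a path flow. -/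
def edgeFlow (G : RoutingInstance V E K) (f : K → (List E →₀ ℝ)) (e : E) : ℝ :=
  ∑ k, G.edgeFlowK f k e

/-- Latency (cost) of a path under the edge flows induced by the path flow `f`. -/
def pathCost (G : RoutingInstance V E K) (f : K → (List E →₀ ℝ)) (p : List E) : ℝ :=
  (p.map fun e => G.latency e (G.edgeFlow f e)).sum

/-- A path is used by commodity `k` if it carries positive flow in `f`. -/
def Used (G : RoutingInstance V E K) (f : K → (List E →₀ ℝ)) (k : K) (p : List E) : Prop :=
  0 < f k p

/-- A path is positive for commodity `k` if each of its edges carries positive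
commodity-`k` flow. -/
def PositivePath (G : RoutingInstance V E K) (f : K → (List E →₀ ℝ)) (k : K) (p : List E) :
    Prop :=
  G.IsPathOf k p ∧ ∀ e ∈ p, 0 < G.edgeFlowK f k e

/-- θ-Positive Nash Equilibrium (a property of the induced edge flow):
every positive path costs at most θ times any path of the same commodity. -/
def IsPNE (G : RoutingInstance V E K) (θ : ℝ) (f : K → (List E →₀ ℝ)) : Prop :=
  ∀ k p q, G.PositivePath f k p → G.IsPathOf k q →
    G.pathCost f p ≤ θ * G.pathCost f q

/-- θ-Used Nash Equilibrium: every used path costs at most θ times any path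
of the same commodity. -/
def IsUNE (G : RoutingInstance V E K) (θ : ℝ) (f : K → (List E →₀ ℝ)) : Prop :=
  ∀ k p q, G.Used f k p → G.IsPathOf k q →
    G.pathCost f p ≤ θ * G.pathCost f q

/-- θ-Envy Free: every used path costs at most θ times any used path
of the same commodity. -/
def IsEF (G : RoutingInstance V E K) (θ : ℝ) (f : K → (List E →₀ ℝ)) : Prop :=
  ∀ k p q, G.Used f k p → G.Used f k q →
    G.pathCost f p ≤ θ * G.pathCost f q

/-- Social cost of a path flow. -/
def socialCost (G : RoutingInstance V E K) (f : K → (List E →₀ ℝ)) : ℝ :=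
  ∑ e, G.edgeFlow f e * G.latency e (G.edgeFlow f e)

end RoutingInstance

/-!
A simple `s`–`t` path picks one link in each stage, so paths correspond to selectors
`b : Fin n → Bool` (`true` for the top link). When every edge carries `1/2`, the path `b`
costs `Q/2 + S_b/2`, where `Q = ∑ qᵢ = 2B` and `S_b` sums the `qᵢ` of the top links taken,
and the social cost is `3Q/4`; it is optimal because a stage whose bottom link carries `x`
costs `q (1 - x) + q x² ≥ 3q/4`.

The social cost is also the flow-weighted average of the costs of the used paths, so some
used path costs at least `3Q/4` and some at most `3Q/4`. Under 1-EF all used paths cost the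
same; under `3/2`-UNE each costs at most `3/2` times the all-bottom path, i.e. `3Q/4`. Either
way some used path `b` costs exactly `3Q/4`, that is `S_b = B`. Conversely, a set `I` with
`∑_{i ∈ I} qᵢ = B` gives the decomposition sending `1/2` along `I` and `1/2` along its
complement, and both paths cost `3Q/4`.
-/

theorem Finsupp.exists_pos_and_sum_mul_le {α : Type*} {w : α →₀ ℝ} (hw : ∀ a, 0 ≤ w a)
    (hw1 : (w.sum fun _ v => v) = 1) (c : α → ℝ) :
    ∃ a, 0 < w a ∧ (w.sum fun a v => v * c a) ≤ c a := by
  set avg := w.sum fun a v => v * c a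
  have hne : w.support.Nonempty := by
    by_contra h
    simp [Finsupp.sum, Finset.not_nonempty_iff_eq_empty.mp h] at hw1
  have hle : ∑ a ∈ w.support, w a * avg ≤ ∑ a ∈ w.support, w a * c a := by
    rw [← Finset.sum_mul]
    simp only [Finsupp.sum] at hw1
    rw [hw1, one_mul]
    rfl
  obtain ⟨a, ha, hac⟩ := Finset.exists_le_of_sum_le hne hle
  have hpos : 0 < w a := (hw a).lt_of_ne' (Finsupp.mem_support_iff.mp ha)
  exact ⟨a, hpos, le_of_mul_le_mul_left hac hpos⟩

theorem Finsupp.exists_pos_and_le_sum_mul {α : Type*} {w : α →₀ ℝ} (hw : ∀ a, 0 ≤ w a)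
    (hw1 : (w.sum fun _ v => v) = 1) (c : α → ℝ) :
    ∃ a, 0 < w a ∧ c a ≤ w.sum fun a v => v * c a := by
  obtain ⟨a, ha, hle⟩ := exists_pos_and_sum_mul_le hw hw1 (-c)
  refine ⟨a, ha, ?_⟩
  simpa [Finsupp.sum] using hle

namespace RoutingInstance

section General

variable {V E K : Type*} {G : RoutingInstance V E K} {f : K → (List E →₀ ℝ)}

theorem IsPathOf.nodup {k : K} {p : List E} (hp : G.IsPathOf k p) : p.Nodup :=
  (List.nodup_cons.mp hp.2).2.of_map G.tgt

theorem Feasible.isPathOf_of_used (hf : G.Feasible f) {k : K} {p : List E}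
    (hp : G.Used f k p) : G.IsPathOf k p :=
  hf.2.1 k p hp.ne'

variable [Fintype K] [DecidableEq E]

theorem edgeFlow_nonneg (hf : G.Feasible f) (e : E) : 0 ≤ G.edgeFlow f e :=
  Finset.sum_nonneg fun k _ => Finset.sum_nonneg fun p _ => by
    dsimp only
    split_ifs
    exacts [hf.1 k p, le_rfl]

theorem edgeFlow_eq_sum {G : RoutingInstance V E Unit} (f : Unit → (List E →₀ ℝ)) (e : E) :
    G.edgeFlow f e = (f ()).sum fun p v => if e ∈ p then v else 0 :=
  Fintype.sum_unique _

theorem pathCost_eq_sum_ite [Fintype E] {p : List E} (hp : p.Nodup) :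
    G.pathCost f p = ∑ e, if e ∈ p then G.latency e (G.edgeFlow f e) else 0 := by
  simp_rw [← List.mem_toFinset]
  rw [Finset.sum_ite_mem, Finset.univ_inter, List.sum_toFinset _ hp, pathCost]

-- `pathCost` counts an edge once per occurrence and `edgeFlow` once per path: the two sums
-- agree because simple paths repeat no edge.
theorem sum_sum_mul_pathCost_eq_socialCost [Fintype E] (hf : G.Feasible f) :
    ∑ k, ((f k).sum fun p v => v * G.pathCost f p) = G.socialCost f := by
  have hcost : ∀ k, ∀ p ∈ (f k).support, f k p * G.pathCost f p =
      ∑ e, (if e ∈ p then f k p else 0) * G.latency e (G.edgeFlow f e) := by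
    intro k p hp
    rw [pathCost_eq_sum_ite (hf.2.1 k p (Finsupp.mem_support_iff.mp hp)).nodup, Finset.mul_sum]
    refine Finset.sum_congr rfl fun e _ => ?_
    split_ifs <;> simp
  simp only [socialCost, edgeFlow, edgeFlowK, Finsupp.sum, Finset.sum_mul]
  rw [Finset.sum_comm]
  refine Finset.sum_congr rfl fun k _ => ?_
  rw [Finset.sum_comm]
  exact Finset.sum_congr rfl (hcost k)

theorem exists_used_socialCost_le_pathCost [Fintype E] {G : RoutingInstance V E Unit}
    {f : Unit → (List E →₀ ℝ)} (hf : G.Feasible f) (hd : G.demand () = 1) :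
    ∃ p, G.Used f () p ∧ G.socialCost f ≤ G.pathCost f p := by
  rw [← sum_sum_mul_pathCost_eq_socialCost hf, Fintype.sum_unique]
  exact Finsupp.exists_pos_and_sum_mul_le (hf.1 ()) ((hf.2.2 ()).trans hd) _

theorem exists_used_pathCost_le_socialCost [Fintype E] {G : RoutingInstance V E Unit}
    {f : Unit → (List E →₀ ℝ)} (hf : G.Feasible f) (hd : G.demand () = 1) :
    ∃ p, G.Used f () p ∧ G.pathCost f p ≤ G.socialCost f := by
  rw [← sum_sum_mul_pathCost_eq_socialCost hf, Fintype.sum_unique]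
  exact Finsupp.exists_pos_and_le_sum_mul (hf.1 ()) ((hf.2.2 ()).trans hd) _

end General

section StageSeries

variable {n : ℕ}

structure IsStageSeries (G : RoutingInstance (Fin (n + 1)) (Fin n × Bool) Unit) : Prop where
  src_eq : ∀ e, G.src e = e.1.castSucc
  tgt_eq : ∀ e, G.tgt e = e.1.succ
  source_eq : G.source () = 0
  sink_eq : G.sink () = Fin.last n

def stagePath (b : Fin n → Bool) : List (Fin n × Bool) :=
  List.ofFn fun i => (i, b i)

theorem mem_stagePath {b : Fin n → Bool} {e : Fin n × Bool} :
    e ∈ stagePath b ↔ b e.1 = e.2 := by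
  simp only [stagePath, List.mem_ofFn]
  constructor
  · rintro ⟨i, rfl⟩
    rfl
  · intro h
    exact ⟨e.1, by rw [h]⟩

variable {G : RoutingInstance (Fin (n + 1)) (Fin n × Bool) Unit}

theorem IsStageSeries.isWalkFrom_iff (hG : G.IsStageSeries) (l : List (Fin n × Bool))
    (s t : Fin (n + 1)) :
    G.IsWalkFrom s t l ↔
      (∀ j (hj : j < l.length), (l[j].1 : ℕ) = s + j) ∧ (s : ℕ) + l.length = t := by
  induction l generalizing s with
  | nil => simp [IsWalkFrom, Fin.ext_iff]
  | cons e l ih =>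
    simp only [IsWalkFrom, ih, hG.src_eq, hG.tgt_eq, Fin.ext_iff, Fin.val_castSucc, Fin.val_succ,
      List.length_cons]
    constructor
    · rintro ⟨he, hl, ht⟩
      refine ⟨fun j hj => ?_, by omega⟩
      cases j with
      | zero => simpa using he
      | succ j => simp only [List.getElem_cons_succ, hl j (by omega)]; omega
    · rintro ⟨h, ht⟩
      have he : (e.1 : ℕ) = s := by simpa using h 0 (by omega)
      refine ⟨he, fun j hj => ?_, by omega⟩
      have hj' := h (j + 1) (by omega)
      simp only [List.getElem_cons_succ] at hj'
      omega

theorem IsStageSeries.isPathOf_iff (hG : G.IsStageSeries) {p : List (Fin n × Bool)} :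
    G.IsPathOf () p ↔ ∃ b, p = stagePath b := by
  simp only [IsPathOf, hG.isWalkFrom_iff, hG.source_eq, hG.sink_eq, Fin.val_zero, Fin.val_last,
    zero_add]
  constructor
  · rintro ⟨⟨hl, hlen⟩, -⟩
    refine ⟨fun i => (p[i.1]'(by omega)).2, List.ext_getElem (by simp [stagePath, hlen]) ?_⟩
    intro j h1 _
    simp only [stagePath, List.getElem_ofFn]
    exact Prod.ext (Fin.ext (hl j h1)) rfl
  · rintro ⟨b, rfl⟩
    refine ⟨⟨fun j hj => by simp [stagePath], by simp [stagePath]⟩, ?_⟩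
    have htgt : G.tgt ∘ (fun i => (i, b i)) = Fin.succ := funext fun i => hG.tgt_eq _
    rw [walkVerts, stagePath, List.map_ofFn, htgt, List.nodup_cons,
      List.mem_ofFn, List.nodup_ofFn]
    exact ⟨fun ⟨i, hi⟩ => Fin.succ_ne_zero i hi, Fin.succ_injective n⟩

theorem IsStageSeries.edgeFlow_true_add_edgeFlow_false (hG : G.IsStageSeries)
    {f : Unit → (List (Fin n × Bool) →₀ ℝ)} (hf : G.Feasible f) (i : Fin n) :
    G.edgeFlow f (i, true) + G.edgeFlow f (i, false) = G.demand () := by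
  rw [edgeFlow_eq_sum, edgeFlow_eq_sum, ← hf.2.2 (), Finsupp.sum, Finsupp.sum, Finsupp.sum,
    ← Finset.sum_add_distrib]
  refine Finset.sum_congr rfl fun p hp => ?_
  obtain ⟨b, rfl⟩ := hG.isPathOf_iff.mp (hf.2.1 () p (Finsupp.mem_support_iff.mp hp))
  cases hb : b i <;> simp [mem_stagePath, hb]

noncomputable def halfFlow (b : Fin n → Bool) : Unit → (List (Fin n × Bool) →₀ ℝ) :=
  fun _ => Finsupp.single (stagePath b) (1 / 2) + Finsupp.single (stagePath fun i => !b i) (1 / 2)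

theorem eq_of_halfFlow_ne_zero {b : Fin n → Bool} {p : List (Fin n × Bool)}
    (hp : halfFlow b () p ≠ 0) : p = stagePath b ∨ p = stagePath fun i => !b i := by
  by_contra! h
  simp [halfFlow, Ne.symm h.1, Ne.symm h.2] at hp

theorem IsStageSeries.feasible_halfFlow (hG : G.IsStageSeries) (hd : G.demand () = 1)
    (b : Fin n → Bool) : G.Feasible (halfFlow b) := by
  refine ⟨fun _ p => ?_, fun _ p hp => ?_, fun _ => ?_⟩
  · simp only [halfFlow, Finsupp.add_apply, Finsupp.single_apply]
    positivity
  · rcases eq_of_halfFlow_ne_zero hp with rfl | rfl <;> exact hG.isPathOf_iff.mpr ⟨_, rfl⟩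
  · rw [halfFlow, Finsupp.sum_add_index' (fun _ => rfl) (fun _ _ _ => rfl),
      Finsupp.sum_single_index rfl, Finsupp.sum_single_index rfl, hd]
    norm_num

theorem edgeFlow_halfFlow (b : Fin n → Bool) (e : Fin n × Bool) :
    G.edgeFlow (halfFlow b) e = 1 / 2 := by
  rw [edgeFlow_eq_sum, halfFlow, Finsupp.sum_add_index' (fun _ => by simp)
      (fun _ _ _ => by split_ifs <;> simp), Finsupp.sum_single_index (by simp),
    Finsupp.sum_single_index (by simp)]
  obtain ⟨i, c⟩ := e
  cases hb : b i <;> cases c <;> simp [mem_stagePath, hb]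

structure HasStageLatencies (G : RoutingInstance (Fin (n + 1)) (Fin n × Bool) Unit)
    (q : Fin n → ℝ) : Prop where
  latency_top : ∀ i x, G.latency (i, true) x = q i
  latency_bot : ∀ i x, 0 ≤ x → G.latency (i, false) x = q i * x

namespace HasStageLatencies

variable {q : Fin n → ℝ} {f : Unit → (List (Fin n × Bool) →₀ ℝ)}

theorem latency_half (hL : G.HasStageLatencies q) (i : Fin n) (c : Bool) :
    G.latency (i, c) (1 / 2) = q i / 2 + (if c then q i else 0) / 2 := by
  cases c
  · rw [hL.latency_bot i _ (by norm_num)]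
    simp only [Bool.false_eq_true, if_false]
    ring
  · rw [hL.latency_top]
    simp

theorem pathCost_stagePath (hL : G.HasStageLatencies q) (hf : ∀ e, G.edgeFlow f e = 1 / 2)
    (b : Fin n → Bool) :
    G.pathCost f (stagePath b) = (∑ i, q i) / 2 + (∑ i with b i, q i) / 2 := by
  simp only [pathCost, stagePath, List.map_ofFn, List.sum_ofFn, Function.comp_def, hf,
    hL.latency_half, Finset.sum_add_distrib, ← Finset.sum_div, Finset.sum_ite,
    Finset.sum_const_zero, add_zero]

theorem socialCost_eq (hL : G.HasStageLatencies q) (hf : ∀ e, G.edgeFlow f e = 1 / 2) :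
    G.socialCost f = 3 / 4 * ∑ i, q i := by
  simp only [socialCost, hf, Fintype.sum_prod_type, Fintype.sum_bool, hL.latency_half,
    Finset.mul_sum]
  refine Finset.sum_congr rfl fun i _ => ?_
  simp only [if_true, Bool.false_eq_true, if_false]
  ring

theorem three_quarters_sum_le_socialCost (hL : G.HasStageLatencies q) (hG : G.IsStageSeries)
    (hq : ∀ i, 0 ≤ q i) (hf : G.Feasible f) (hd : G.demand () = 1) :
    3 / 4 * ∑ i, q i ≤ G.socialCost f := by
  rw [socialCost, Fintype.sum_prod_type, Finset.mul_sum]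
  refine Finset.sum_le_sum fun i _ => ?_
  have hbot := edgeFlow_nonneg hf (i, false)
  have htop : G.edgeFlow f (i, true) = 1 - G.edgeFlow f (i, false) := by
    linarith [hG.edgeFlow_true_add_edgeFlow_false hf i]
  rw [Fintype.sum_bool, htop, hL.latency_top, hL.latency_bot i _ hbot]
  -- with `x` the bottom flow, the stage costs `q (1 - x) + q x² = 3q/4 + q (x - 1/2)²`
  nlinarith [mul_nonneg (hq i) (sq_nonneg (G.edgeFlow f (i, false) - 1 / 2))]

theorem pathCost_of_used_halfFlow (hL : G.HasStageLatencies q) {I : Finset (Fin n)}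
    (hI : 2 * ∑ i ∈ I, q i = ∑ i, q i) {p : List (Fin n × Bool)}
    (hp : G.Used (halfFlow fun i => decide (i ∈ I)) () p) :
    G.pathCost (halfFlow fun i => decide (i ∈ I)) p = 3 / 4 * ∑ i, q i := by
  have hcompl := Finset.sum_compl_add_sum I q
  rcases eq_of_halfFlow_ne_zero hp.ne' with rfl | rfl <;>
    rw [hL.pathCost_stagePath (edgeFlow_halfFlow _)] <;>
    simp only [decide_eq_true_eq, Bool.not_eq_true', decide_eq_false_iff_not,
      Finset.filter_mem_eq_inter, Finset.univ_inter, Finset.filter_not,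
      ← Finset.compl_eq_univ_sdiff] <;>
    linarith

theorem sum_div_two_le_pathCost (hL : G.HasStageLatencies q) (hG : G.IsStageSeries)
    (hq : ∀ i, 0 ≤ q i) (hf : ∀ e, G.edgeFlow f e = 1 / 2) {p : List (Fin n × Bool)}
    (hp : G.IsPathOf () p) : (∑ i, q i) / 2 ≤ G.pathCost f p := by
  obtain ⟨b, rfl⟩ := hG.isPathOf_iff.mp hp
  rw [hL.pathCost_stagePath hf]
  linarith [Finset.sum_nonneg fun i (_ : i ∈ Finset.univ.filter fun i => b i) => hq i]

theorem exists_two_mul_sum_eq_of_pathCost_eq (hL : G.HasStageLatencies q) (hG : G.IsStageSeries)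
    (hf : ∀ e, G.edgeFlow f e = 1 / 2) {p : List (Fin n × Bool)} (hp : G.IsPathOf () p)
    (hcost : G.pathCost f p = 3 / 4 * ∑ i, q i) :
    ∃ I : Finset (Fin n), 2 * ∑ i ∈ I, q i = ∑ i, q i := by
  obtain ⟨b, rfl⟩ := hG.isPathOf_iff.mp hp
  rw [hL.pathCost_stagePath hf] at hcost
  exact ⟨Finset.univ.filter fun i => b i, by linarith⟩

end HasStageLatencies

end StageSeries

end RoutingInstance

theorem exists_sum_eq_iff_exists_two_mul_sum_eq {ι : Type*} [Fintype ι] {q : ι → ℕ} {B : ℕ}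
    (hsum : ∑ i, q i = 2 * B) :
    (∃ I : Finset ι, ∑ i ∈ I, q i = B) ↔
      ∃ I : Finset ι, 2 * ∑ i ∈ I, (q i : ℝ) = ∑ i, (q i : ℝ) := by
  refine exists_congr fun I => ?_
  rw [← Nat.cast_sum, ← Nat.cast_sum, hsum]
  exact_mod_cast (by omega : ∑ i ∈ I, q i = B ↔ 2 * ∑ i ∈ I, q i = 2 * B)

open RoutingInstance in
theorem stmt_14_general (n B : ℕ)
    (q : Fin n → ℕ) (hsum : ∑ i, q i = 2 * B)
    (G : RoutingInstance (Fin (n + 1)) (Fin n × Bool) Unit)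
    (hsrc : ∀ e : Fin n × Bool, G.src e = e.1.castSucc)
    (htgt : ∀ e : Fin n × Bool, G.tgt e = e.1.succ)
    (hsource : G.source () = 0)
    (hsink : G.sink () = Fin.last n)
    (hdemand : G.demand () = 1)
    (hlatTop : ∀ (i : Fin n) (x : ℝ), G.latency (i, true) x = (q i : ℝ))
    (hlatBot : ∀ (i : Fin n) (x : ℝ), 0 ≤ x → G.latency (i, false) x = (q i : ℝ) * x) :
    (∃ f₀ : Unit → (List (Fin n × Bool) →₀ ℝ), G.Feasible f₀ ∧
      (∀ e, G.edgeFlow f₀ e = 1 / 2) ∧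
      ∀ g : Unit → (List (Fin n × Bool) →₀ ℝ), G.Feasible g →
        G.socialCost f₀ ≤ G.socialCost g) ∧
    ((∃ I : Finset (Fin n), ∑ i ∈ I, q i = B) ↔
      (∃ f : Unit → (List (Fin n × Bool) →₀ ℝ), G.Feasible f ∧
        (∀ e, G.edgeFlow f e = 1 / 2) ∧ G.IsEF 1 f)) ∧
    ((∃ I : Finset (Fin n), ∑ i ∈ I, q i = B) ↔
      (∃ f : Unit → (List (Fin n × Bool) →₀ ℝ), G.Feasible f ∧
        (∀ e, G.edgeFlow f e = 1 / 2) ∧ G.IsUNE (3/2) f)) := by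
  have hG : G.IsStageSeries := ⟨hsrc, htgt, hsource, hsink⟩
  have hL : G.HasStageLatencies fun i => (q i : ℝ) := ⟨hlatTop, hlatBot⟩
  have hq : ∀ i, (0 : ℝ) ≤ q i := fun i => Nat.cast_nonneg _
  have hpart := exists_sum_eq_iff_exists_two_mul_sum_eq hsum
  refine ⟨⟨halfFlow fun _ => true, hG.feasible_halfFlow hdemand _, edgeFlow_halfFlow _,
    fun g hg => ?_⟩, hpart.trans ⟨?_, ?_⟩, hpart.trans ⟨?_, ?_⟩⟩
  · rw [hL.socialCost_eq (edgeFlow_halfFlow _)]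
    exact hL.three_quarters_sum_le_socialCost hG hq hg hdemand
  · rintro ⟨I, hI⟩
    refine ⟨halfFlow fun i => decide (i ∈ I), hG.feasible_halfFlow hdemand _,
      edgeFlow_halfFlow _, fun _ p p' hp hp' => ?_⟩
    rw [hL.pathCost_of_used_halfFlow hI hp, hL.pathCost_of_used_halfFlow hI hp', one_mul]
  · rintro ⟨f, hf, hhalf, hEF⟩
    obtain ⟨p, hp, hp_ge⟩ := exists_used_socialCost_le_pathCost hf hdemand
    obtain ⟨p', hp', hp'_le⟩ := exists_used_pathCost_le_socialCost hf hdemand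
    have hle := hEF () p p' hp hp'
    rw [hL.socialCost_eq hhalf] at hp_ge hp'_le
    exact hL.exists_two_mul_sum_eq_of_pathCost_eq hG hhalf (hf.isPathOf_of_used hp) (by linarith)
  · rintro ⟨I, hI⟩
    refine ⟨halfFlow fun i => decide (i ∈ I), hG.feasible_halfFlow hdemand _,
      edgeFlow_halfFlow _, fun _ p p' hp hp' => ?_⟩
    rw [hL.pathCost_of_used_halfFlow hI hp]
    linarith [hL.sum_div_two_le_pathCost hG hq (edgeFlow_halfFlow fun i => decide (i ∈ I)) hp']
  · rintro ⟨f, hf, hhalf, hUNE⟩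
    obtain ⟨p, hp, hp_ge⟩ := exists_used_socialCost_le_pathCost hf hdemand
    have hle := hUNE () p _ hp (hG.isPathOf_iff.mpr ⟨fun _ => false, rfl⟩)
    rw [hL.socialCost_eq hhalf] at hp_ge
    simp only [hL.pathCost_stagePath hhalf, Bool.false_eq_true, Finset.filter_false,
      Finset.sum_empty] at hle
    exact hL.exists_two_mul_sum_eq_of_pathCost_eq hG hhalf (hf.isPathOf_of_used hp) (by linarith)

open RoutingInstance in
/-- For the n-stage series network built from positive integers
q_1, …, q_n with Σ q_i = 2B (stage i: top edge of constant latency q_i, bottom edge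
of latency q_i·x) and unit demand, the edge flow o routing 1/2 on every edge is
socially optimal, and: there is I with Σ_{i∈I} q_i = B  ⟺  o admits a 1-EF path-flow
decomposition  ⟺  o admits a (3/2)-UNE path-flow decomposition. -/
theorem stmt_14 (n B : ℕ) (hn : 0 < n)
    (q : Fin n → ℕ) (hq : ∀ i, 0 < q i) (hsum : ∑ i, q i = 2 * B)
    (G : RoutingInstance (Fin (n + 1)) (Fin n × Bool) Unit)
    (hsrc : ∀ e : Fin n × Bool, G.src e = e.1.castSucc)
    (htgt : ∀ e : Fin n × Bool, G.tgt e = e.1.succ)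
    (hsource : G.source () = 0)
    (hsink : G.sink () = Fin.last n)
    (hdemand : G.demand () = 1)
    (hlatTop : ∀ (i : Fin n) (x : ℝ), G.latency (i, true) x = (q i : ℝ))
    (hlatBot : ∀ (i : Fin n) (x : ℝ), 0 ≤ x → G.latency (i, false) x = (q i : ℝ) * x) :
    (∃ f₀ : Unit → (List (Fin n × Bool) →₀ ℝ), G.Feasible f₀ ∧
      (∀ e, G.edgeFlow f₀ e = 1 / 2) ∧
      ∀ g : Unit → (List (Fin n × Bool) →₀ ℝ), G.Feasible g →
        G.socialCost f₀ ≤ G.socialCost g) ∧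
    ((∃ I : Finset (Fin n), ∑ i ∈ I, q i = B) ↔
      (∃ f : Unit → (List (Fin n × Bool) →₀ ℝ), G.Feasible f ∧
        (∀ e, G.edgeFlow f e = 1 / 2) ∧ G.IsEF 1 f)) ∧
    ((∃ I : Finset (Fin n), ∑ i ∈ I, q i = B) ↔
      (∃ f : Unit → (List (Fin n × Bool) →₀ ℝ), G.Feasible f ∧
        (∀ e, G.edgeFlow f e = 1 / 2) ∧ G.IsUNE (3/2) f)) :=
  stmt_14_general n B q hsum G hsrc htgt hsource hsink hdemand hlatTop hlatBot
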